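/- In the setting where Z = {0,1,2}, Q is i.i.d. with q(0)=φ, q(1)=1−φ−ψ, q(2)=ψ (φ ∈ (0,1/2), ψ ∈ (0,1/2−φ)), and P conditions Z_2,...,Z_T to be all equal to 2 when Z_1 = 0 and to be i.i.d. q otherwise: the expected average conditional total variation distance satisfies V_T = ((T−1)/T)·φ·(1−ψ). -/

import Mathlib

/-!
Under `Q` every conditional law is `q`. Under `P` the conditional law differs from `q` only at
times `t ≥ 2` on trajectories with `Z₁ = 0`, where it is the point mass at `2`, at total variation
distance `1 - q 2 = 1 - ψ` from `q`. Among those trajectories `P` charges only `(0, 2, …, 2)`, with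
mass `φ`, so the expected sum of the distances is `φ (T - 1) (1 - ψ)`.
-/

open Finset

section
variable {ι α : Type*} [Fintype ι] [DecidableEq ι] [Fintype α] [DecidableEq α]

theorem half_sum_abs_indicator_sub {q : α → ℝ} (hq_nonneg : ∀ z, 0 ≤ q z)
    (hq_sum : ∑ z, q z = 1) (b : α) :
    (1 / 2) * ∑ z, |(if z = b then 1 else 0) - q z| = 1 - q b := by
  have hrest : ∑ z ∈ univ.erase b, q z = 1 - q b := by
    rw [← hq_sum, ← add_sum_erase univ q (mem_univ b)]; ring
  have hqb : q b ≤ 1 := by linarith [sum_nonneg fun z (_ : z ∈ univ.erase b) => hq_nonneg z]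
  rw [← add_sum_erase _ _ (mem_univ b), if_pos rfl, abs_of_nonneg (by linarith),
    sum_congr rfl fun z hz => by
      rw [if_neg (ne_of_mem_erase hz), zero_sub, abs_neg, abs_of_nonneg (hq_nonneg z)], hrest]
  ring

theorem sum_ite_ne_const (t₀ : ι) (c : ℝ) :
    ∑ t, (if t ≠ t₀ then c else 0) = ((Fintype.card ι : ℝ) - 1) * c := by
  rw [sum_ite, sum_const_zero, add_zero, sum_const, filter_ne', card_erase_of_mem (mem_univ t₀),
    card_univ, nsmul_eq_mul, Nat.cast_sub (Fintype.card_pos_iff.mpr ⟨t₀⟩), Nat.cast_one]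
end

section
variable {ι α : Type*} [DecidableEq ι] [Fintype α] [DecidableEq α]
  {q : α → ℝ} {t₀ : ι} {a b : α}

theorem condTV_eq_ite (hq_nonneg : ∀ z, 0 ≤ q z) (hq_sum : ∑ z, q z = 1)
    {Pker : ι → (ι → α) → α → ℝ}
    (hPker : ∀ t x z, Pker t x z = if t = t₀ then q z
      else if x t₀ = a then (if z = b then 1 else 0) else q z)
    {v : (ι → α) → ι → ℝ} (hv : ∀ x t, v x t = (1 / 2) * ∑ z, |Pker t x z - q z|)
    (x : ι → α) (t : ι) :
    v x t = if t ≠ t₀ ∧ x t₀ = a then 1 - q b else 0 := by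
  rw [hv]
  by_cases ht : t = t₀
  · simp [hPker, ht]
  by_cases hx : x t₀ = a
  · simp only [hPker, ht, hx, if_false, if_true, ne_eq, not_false_eq_true, and_self]
    exact half_sum_abs_indicator_sub hq_nonneg hq_sum b
  · simp [hPker, ht, hx]

theorem sum_mul_sum_condTV_eq [Fintype ι] (hq_nonneg : ∀ z, 0 ≤ q z) (hq_sum : ∑ z, q z = 1)
    [DecidablePred fun x : ι → α => ∀ t, t ≠ t₀ → x t = b] {c : ℝ} {P : (ι → α) → ℝ}
    (hP : ∀ x, P x = if x t₀ = a then (if ∀ t, t ≠ t₀ → x t = b then c else 0)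
      else ∏ t, q (x t))
    {Pker : ι → (ι → α) → α → ℝ}
    (hPker : ∀ t x z, Pker t x z = if t = t₀ then q z
      else if x t₀ = a then (if z = b then 1 else 0) else q z)
    {v : (ι → α) → ι → ℝ} (hv : ∀ x t, v x t = (1 / 2) * ∑ z, |Pker t x z - q z|) :
    ∑ x, P x * ∑ t, v x t = c * (((Fintype.card ι : ℝ) - 1) * (1 - q b)) := by
  have hv' := condTV_eq_ite (b := b) hq_nonneg hq_sum hPker hv
  set x₀ : ι → α := Function.update (fun _ => b) t₀ a
  have hx₀ : x₀ t₀ = a ∧ ∀ t, t ≠ t₀ → x₀ t = b := Function.eq_update_iff.mp rfl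
  rw [sum_eq_single x₀]
  · rw [hP, if_pos hx₀.1, if_pos hx₀.2]
    simp only [hv', hx₀.1, and_true, sum_ite_ne_const]
  · intro x _ hne
    by_cases hx : x t₀ = a
    · rw [hP, if_pos hx, if_neg fun h => hne (Function.eq_update_iff.mpr ⟨hx, h⟩), zero_mul]
    · simp [hv', hx]
  · exact fun h => absurd (mem_univ x₀) h
end

/-- Expected average conditional total variation distance in the impossibility
construction: `V_T = ((T−1)/T)·φ·(1−ψ)`. -/
theorem stmt_16 (T : ℕ) (hT : 2 ≤ T) (φ ψ : ℝ)
    (hφ : φ ∈ Set.Ioo (0 : ℝ) (1 / 2)) (hψ : ψ ∈ Set.Ioo (0 : ℝ) (1 / 2 - φ))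
    (q : Fin 3 → ℝ)
    (hq : ∀ z, q z = if z = 0 then φ else if z = 1 then 1 - φ - ψ else ψ)
    (P : (Fin T → Fin 3) → ℝ)
    (hP : ∀ x, P x = if x ⟨0, by omega⟩ = 0 then
        (if ∀ t : Fin T, t ≠ ⟨0, by omega⟩ → x t = 2 then φ else 0)
      else ∏ t, q (x t))
    -- the conditional kernel of `P` at time `t` given the past, along trajectory `x`
    (Pker : Fin T → (Fin T → Fin 3) → Fin 3 → ℝ)
    (hPker : ∀ t x z, Pker t x z = if t.val = 0 then q z
      else (if x ⟨0, by omega⟩ = 0 then (if z = 2 then 1 else 0) else q z))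
    -- per-step conditional total variation distance (the kernel of `Q` is `q`)
    (v : (Fin T → Fin 3) → Fin T → ℝ)
    (hv : ∀ x t, v x t = (1 / 2) * ∑ z, |Pker t x z - q z|)
    (VT : ℝ) (hVT : VT = ∑ x, P x * ((1 / (T : ℝ)) * ∑ t, v x t)) :
    VT = (((T : ℝ) - 1) / T) * φ * (1 - ψ) := by
  have hq_nonneg : ∀ z, 0 ≤ q z := by
    intro z; rw [hq]; split_ifs <;> linarith [hφ.1, hψ.1, hψ.2]
  have hq_sum : ∑ z, q z = 1 := by simp only [Fin.sum_univ_three, hq]; simp; ring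
  have hPker' : ∀ t x z, Pker t x z = if t = ⟨0, by omega⟩ then q z
      else if x ⟨0, by omega⟩ = 0 then (if z = 2 then 1 else 0) else q z := by
    intro t x z; rw [hPker]; simp only [Fin.ext_iff]
  have h_expect := sum_mul_sum_condTV_eq hq_nonneg hq_sum hP hPker' hv
  have hq2 : q 2 = ψ := by simp [hq]
  calc VT = (1 / T) * ∑ x, P x * ∑ t, v x t := by
        rw [hVT, mul_sum]; exact sum_congr rfl fun x _ => by ring
    _ = (((T : ℝ) - 1) / T) * φ * (1 - ψ) := by
        rw [h_expect, Fintype.card_fin, hq2]; ring
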